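/- arXiv:1401.7775 — 4 statements merged into one kernel-verified Lean document; each statement's English description precedes it below -/
import Mathlib

section
/- Let C be a category with finite limits and let n ≤ m be natural numbers. Then for any simplicial object X in C, the canonical map cosk_n(X) → cosk_m(cosk_n(X)) induced by the adjunction unit is an isomorphism, i.e. cosk_n is naturally isomorphic to cosk_m ∘ cosk_n. (This corrects a wrongly stated claim in SGA 4 V 7.1.2.) -/
/-!
The comma categories `[k] ↓ Δ_{≤n}` are finite, so with finite limits an `n`-coskeletal object
`Y` is a *pointwise* right Kan extension of its `n`-truncation:
`Y_k = lim_{[k] → [j], j ≤ n} Y_j`. For `n ≤ m` this formula already exhibits `Y` as a pointwise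
right Kan extension of its `m`-truncation: a cone over the `m`-truncated diagram restricts to one
over the `n`-truncated diagram, and it is recovered from that restriction because every `Y_j` with
`j ≤ m` is itself such a limit and `Δ_{≤m} ⊆ Δ` is full. Since `cosk_n X` is `n`-coskeletal, it is
therefore `m`-coskeletal, which is the invertibility of the unit.
-/

open CategoryTheory Limits Functor

instance Opposite.finite {α : Type*} [Finite α] : Finite αᵒᵖ :=
  Finite.of_equiv α Opposite.equivToOpposite

namespace CategoryTheory

instance finite_op_hom {C : Type*} [Category C] (x y : Cᵒᵖ) [Finite (y.unop ⟶ x.unop)] :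
    Finite (x ⟶ y) :=
  Finite.of_injective Quiver.Hom.unop Quiver.Hom.unop_inj

instance ObjectProperty.finite_fullSubcategory_hom {C : Type*} [Category C] {P : ObjectProperty C}
    (x y : P.FullSubcategory) [Finite (x.obj ⟶ y.obj)] : Finite (x ⟶ y) :=
  Finite.of_injective (fun f => f.hom) fun _ _ => ObjectProperty.hom_ext P

namespace StructuredArrow

variable {D T : Type*} [Category D] [Category T] (b : T) (L : D ⥤ T)

instance finite [Finite D] [∀ d, Finite (b ⟶ L.obj d)] : Finite (StructuredArrow b L) :=
  Finite.of_injective (fun f => (⟨f.right, f.hom⟩ : Σ d, b ⟶ L.obj d)) fun f g h => by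
    obtain ⟨hr, hh⟩ := Sigma.mk.inj_iff.mp h
    exact obj_ext f g hr (by cases f; cases g; cases hr; simpa using hh)

instance finite_hom (f g : StructuredArrow b L) [Finite (f.right ⟶ g.right)] : Finite (f ⟶ g) :=
  Finite.of_injective (fun φ => φ.right) fun _ _ => hom_ext _ _

end StructuredArrow

end CategoryTheory

namespace SimplexCategory.Truncated

instance finite (n : ℕ) : Finite (Truncated n) :=
  Finite.of_injective (fun a => (⟨a.obj.len, Nat.lt_succ_of_le a.property⟩ : Fin (n + 1)))
    fun _ _ h => ObjectProperty.FullSubcategory.ext (SimplexCategory.ext (congrArg Fin.val h))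

noncomputable instance finCategory_structuredArrow (n : ℕ) (b : SimplexCategoryᵒᵖ) :
    FinCategory (StructuredArrow b (inclusion n).op) where
  fintypeObj := Fintype.ofFinite _
  fintypeHom _ _ := Fintype.ofFinite _

instance hasPointwiseRightKanExtension {C : Type*} [Category C] [HasFiniteLimits C] (n : ℕ)
    (F : (Truncated n)ᵒᵖ ⥤ C) : (inclusion n).op.HasPointwiseRightKanExtension F :=
  fun _ => inferInstance

end SimplexCategory.Truncated

namespace CategoryTheory.Functor.RightExtension

variable {A B D H : Type*} [Category A] [Category B] [Category D] [Category H]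

lemma coneAt_mk_id_π_app (L : A ⥤ D) (G : D ⥤ H) (d : D) (g : StructuredArrow d L) :
    ((mk G (𝟙 (L ⋙ G))).coneAt d).π.app g = G.map g.hom :=
  Category.comp_id _

noncomputable def isPointwiseRightKanExtensionOfComp (L₁ : A ⥤ B) (L₂ : B ⥤ D) [L₂.Full]
    (G : D ⥤ H) (hG : (mk G (𝟙 ((L₁ ⋙ L₂) ⋙ G))).IsPointwiseRightKanExtension) :
    (mk G (𝟙 (L₂ ⋙ G))).IsPointwiseRightKanExtension := fun d =>
  { lift s := (hG d).lift (s.whisker (StructuredArrow.pre d L₁ L₂))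
    fac s j := by
      refine (hG (L₂.obj j.right)).hom_ext fun a => ?_
      let j' : StructuredArrow d L₂ := StructuredArrow.mk (Y := L₁.obj a.right) (j.hom ≫ a.hom)
      have hlift : (hG d).lift (s.whisker (StructuredArrow.pre d L₁ L₂)) ≫
          G.map j.hom ≫ G.map a.hom = s.π.app j' :=
        (congrArg _ ((G.map_comp _ _).symm.trans
          (coneAt_mk_id_π_app (L₁ ⋙ L₂) G d (StructuredArrow.mk (j.hom ≫ a.hom))).symm)).trans
          ((hG d).fac _ _)
      have hs : s.π.app j ≫ G.map a.hom = s.π.app j' := by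
        rw [← L₂.map_preimage a.hom]
        exact s.w (StructuredArrow.homMk (L₂.preimage a.hom) : j ⟶ j')
      rw [coneAt_mk_id_π_app, coneAt_mk_id_π_app]
      exact (Category.assoc _ _ _).trans (hlift.trans hs.symm)
    uniq s f hf := (hG d).uniq (s.whisker (StructuredArrow.pre d L₁ L₂)) f
      fun a => hf ((StructuredArrow.pre d L₁ L₂).obj a) }

end CategoryTheory.Functor.RightExtension

namespace CategoryTheory.SimplicialObject

variable {C : Type*} [Category C] [HasFiniteLimits C]

theorem IsCoskeletal.of_le {X : SimplicialObject C} {n m : ℕ} (hnm : n ≤ m) [X.IsCoskeletal n] :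
    X.IsCoskeletal m :=
  ⟨(RightExtension.isPointwiseRightKanExtensionOfComp (SimplexCategory.Truncated.incl n m hnm).op
      (SimplexCategory.Truncated.inclusion m).op X
      (isPointwiseRightKanExtensionOfIsRightKanExtension X
        (𝟙 ((SimplexCategory.Truncated.inclusion n).op ⋙ X)))).isRightKanExtension⟩

instance isCoskeletal_cosk (n : ℕ) [∀ (F : (SimplexCategory.Truncated n)ᵒᵖ ⥤ C),
      (SimplexCategory.Truncated.inclusion n).op.HasRightKanExtension F]
    (X : SimplicialObject C) : ((cosk n).obj X).IsCoskeletal n := by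
  rw [isCoskeletal_iff_isIso]
  -- the unit is invertible on the image of the fully faithful right adjoint `Truncated.cosk n`
  exact inferInstanceAs
    (IsIso ((coskAdj n).unit.app ((Truncated.cosk n).obj ((truncation n).obj X))))

end CategoryTheory.SimplicialObject

/-- For `n ≤ m` and any simplicial object `X` in a category with finite
limits, the canonical adjunction-unit map `cosk_n X ⟶ cosk_m (cosk_n X)` is an isomorphism
(correcting SGA 4 V 7.1.2). -/
theorem cosk_cosk_of_le {C : Type*} [Category C] [HasFiniteLimits C]
    (n m : ℕ) (hnm : n ≤ m)
    [∀ (F : (SimplexCategory.Truncated n)ᵒᵖ ⥤ C),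
      (SimplexCategory.Truncated.inclusion n).op.HasRightKanExtension F]
    [∀ (F : (SimplexCategory.Truncated m)ᵒᵖ ⥤ C),
      (SimplexCategory.Truncated.inclusion m).op.HasRightKanExtension F]
    (X : SimplicialObject C) :
    IsIso ((SimplicialObject.coskAdj m).unit.app ((SimplicialObject.cosk n).obj X)) :=
  (SimplicialObject.isCoskeletal_iff_isIso _ m).mp (.of_le hnm)
end

section
/- Let f : A → B and g : B → A be morphisms of simplicial objects in a category with finite limits such that: (1) f_p : A_p → B_p is inverse to g_p for all p < n; (2) g_n is a section of f_n : A_n → B_n (i.e. f_n ∘ g_n = id); and (3) the canonical maps A → cosk_n A and B → cosk_n B are isomorphisms. Then f and g are simplicial homotopy inverses of each other; in particular f ∘ g is simplicially homotopic to id_B and g ∘ f is simplicially homotopic to id_A. -/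
/-!
Let `u` be `g ≫ f` (or `f ≫ g`), an endomorphism that is the identity in degrees `< n`. In
degrees `≤ n` set `h_τ = u` when `τ(0) = 0` and `h_τ = 𝟙` when `τ` is constant at `1`. These are
compatible with the simplicial operators: the only non-obvious case is `τ(0) = 0` with `α ≫ τ`
constant at `1`; then `α` misses the vertex `0`, so it factors through `δ 0 : [i - 1] ⟶ [i]`,
and `u` is the identity in degree `i - 1 < n`. Since the target is `n`-coskeletal, i.e. each
`Y_j` is the limit of `Y` over the finite category `[j] ↓ Δ_{≤ n}`, such a family on
`n`-truncations extends uniquely to a simplicial homotopy.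
-/

open CategoryTheory CategoryTheory.Limits Opposite

namespace Stmt3

/-- A simplicial homotopy between two maps `f, g : X ⟶ Y` of simplicial objects:
a family of maps `h_τ : X_j ⟶ Y_j` indexed by order-preserving maps `τ : [j] → [1]`,
compatible with the simplicial structure maps, restricting to `f` (resp. `g`) at the
constant map at `0` (resp. `1`). -/
structure SimplicialHomotopy {C : Type*} [Category C] {X Y : CategoryTheory.SimplicialObject C}
    (f g : X ⟶ Y) where
  h : ∀ (j : SimplexCategory), (j ⟶ SimplexCategory.mk 1) → (X.obj (op j) ⟶ Y.obj (op j))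
  compat : ∀ {i j : SimplexCategory} (α : i ⟶ j) (τ : j ⟶ SimplexCategory.mk 1),
    h j τ ≫ Y.map α.op = X.map α.op ≫ h i (α ≫ τ)
  h_zero : ∀ j : SimplexCategory, h j (SimplexCategory.const j (SimplexCategory.mk 1) 0) =
    f.app (op j)
  h_one : ∀ j : SimplexCategory, h j (SimplexCategory.const j (SimplexCategory.mk 1) 1) =
    g.app (op j)

open SimplexCategory SimplicialObject Simplicial

universe v

instance {α : Type*} [Finite α] : Finite αᵒᵖ :=
  Finite.of_equiv α Opposite.equivToOpposite

instance {D : Type*} [Category D] (X Y : Dᵒᵖ) [Finite (Y.unop ⟶ X.unop)] : Finite (X ⟶ Y) :=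
  Finite.of_equiv _ (opEquiv X Y).symm

instance (n : ℕ) : Finite (SimplexCategory.Truncated n) :=
  Finite.of_injective (fun a => (⟨a.obj.len, Nat.lt_succ_of_le a.2⟩ : Fin (n + 1))) fun _ _ h =>
    ObjectProperty.FullSubcategory.ext (SimplexCategory.ext (congrArg Fin.val h))

instance (n : ℕ) (a b : SimplexCategory.Truncated n) : Finite (a ⟶ b) :=
  Finite.of_equiv _ InducedCategory.homEquiv.symm

noncomputable instance (n : ℕ) (Y : SimplexCategoryᵒᵖ) :
    FinCategory (StructuredArrow Y (SimplexCategory.Truncated.inclusion n).op) where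
  fintypeObj := by
    have : Finite (StructuredArrow Y (SimplexCategory.Truncated.inclusion n).op) :=
      Finite.of_injective (fun o => (⟨o.right, o.hom⟩ : Σ d, Y ⟶ _ )) fun o₁ o₂ h => by
        obtain ⟨⟨⟨⟩⟩, r₁, h₁⟩ := o₁
        obtain ⟨⟨⟨⟩⟩, r₂, h₂⟩ := o₂
        obtain ⟨rfl, hh⟩ := Sigma.mk.inj_iff.mp h
        cases eq_of_heq hh
        rfl
    exact Fintype.ofFinite _
  fintypeHom a b :=
    have : Finite (a ⟶ b) := Finite.of_injective _ fun f g => StructuredArrow.hom_ext f g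
    Fintype.ofFinite _

noncomputable def isPointwiseRightKanExtensionOfIsCoskeletal {C : Type*} [Category C]
    [HasFiniteLimits C] (n : ℕ) (X : SimplicialObject C) [X.IsCoskeletal n] :
    (Truncated.rightExtensionInclusion X n).IsPointwiseRightKanExtension :=
  Functor.isPointwiseRightKanExtensionOfIsRightKanExtension _ _

lemma _root_.SimplexCategory.comp_const {x y z : SimplexCategory} (β : x ⟶ y)
    (e : Fin (z.len + 1)) :
    β ≫ const y z e = const x z e :=
  rfl

section

variable {C : Type*} [Category.{v} C] {n : ℕ}

lemma app_comp_map_eq_map_of_not_surjective {X : SimplicialObject C} {u : X ⟶ X}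
    (hu : ∀ p < n, u.app (op ⦋p⦌) = 𝟙 _) {i i' : SimplexCategory} (hi : i.len ≤ n)
    (γ : i' ⟶ i) (hγ : ¬ Function.Surjective γ.toOrderHom) :
    u.app (op i) ≫ X.map γ.op = X.map γ.op := by
  obtain ⟨m, hm⟩ : ∃ m, i.len = m + 1 :=
    Nat.exists_eq_succ_of_ne_zero fun h0 => hγ fun y => ⟨0, Fin.ext (by omega)⟩
  obtain rfl : i = ⦋m + 1⦌ := by rw [← mk_len i, hm]
  obtain ⟨k, γ', rfl⟩ := eq_comp_δ_of_not_surjective γ hγ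
  rw [op_comp, X.map_comp, ← Category.assoc, ← u.naturality, Category.assoc,
    hu m (by simp at hi; omega), Category.id_comp]

def homotopyToIdComponent {X : SimplicialObject C} (u : X ⟶ X) (i : SimplexCategory)
    (τ : i ⟶ ⦋1⦌) : X.obj (op i) ⟶ X.obj (op i) :=
  if τ.toOrderHom 0 = 0 then u.app (op i) else 𝟙 _

lemma homotopyToIdComponent_comp_map {X : SimplicialObject C} {u : X ⟶ X}
    (hu : ∀ p < n, u.app (op ⦋p⦌) = 𝟙 _) {i i' : SimplexCategory} (hi : i.len ≤ n)
    (γ : i' ⟶ i) (τ : i ⟶ ⦋1⦌) :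
    homotopyToIdComponent u i τ ≫ X.map γ.op =
      X.map γ.op ≫ homotopyToIdComponent u i' (γ ≫ τ) := by
  have hγτ : (γ ≫ τ).toOrderHom 0 = τ.toOrderHom (γ.toOrderHom 0) := rfl
  unfold homotopyToIdComponent
  by_cases hτ : τ.toOrderHom 0 = 0
  · by_cases hγτ0 : τ.toOrderHom (γ.toOrderHom 0) = 0
    · simp only [hτ, hγτ, hγτ0, if_true]
      exact (u.naturality γ.op).symm
    · have hγ : ¬ Function.Surjective γ.toOrderHom := fun hsurj => by
        obtain ⟨x, hx⟩ := hsurj 0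
        have hγ0 : γ.toOrderHom 0 = 0 :=
          le_antisymm (hx ▸ γ.toOrderHom.monotone (Fin.zero_le x)) (Fin.zero_le _)
        exact hγτ0 (hγ0 ▸ hτ)
      simp only [hτ, hγτ, hγτ0, if_true, if_false, Category.comp_id]
      exact app_comp_map_eq_map_of_not_surjective hu hi γ hγ
  · have hγτ0 : τ.toOrderHom (γ.toOrderHom 0) ≠ 0 := fun h =>
      hτ (le_antisymm (h ▸ τ.toOrderHom.monotone (Fin.zero_le _)) (Fin.zero_le _))
    simp only [hτ, hγτ, hγτ0, if_false, Category.comp_id, Category.id_comp]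

lemma hom_ext_of_isPointwiseRightKanExtension {Y : SimplicialObject C}
    (P : (Truncated.rightExtensionInclusion Y n).IsPointwiseRightKanExtension)
    {j : SimplexCategory} {T : C} {w₁ w₂ : T ⟶ Y.obj (op j)}
    (hw : ∀ (i : SimplexCategory), i.len ≤ n → ∀ β : i ⟶ j, w₁ ≫ Y.map β.op = w₂ ≫ Y.map β.op) :
    w₁ = w₂ :=
  (P (op j)).hom_ext fun a => by
    show w₁ ≫ Y.map a.hom ≫ 𝟙 _ = w₂ ≫ Y.map a.hom ≫ 𝟙 _
    simpa using hw _ a.right.unop.2 a.hom.unop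

namespace SimplicialHomotopy

variable {X Y : SimplicialObject C} {f g : X ⟶ Y}
  (k : ∀ i : SimplexCategory, (i ⟶ ⦋1⦌) → (X.obj (op i) ⟶ Y.obj (op i)))
  (hk : ∀ {i i' : SimplexCategory}, i.len ≤ n → i'.len ≤ n → ∀ (γ : i' ⟶ i) (τ : i ⟶ ⦋1⦌),
    k i τ ≫ Y.map γ.op = X.map γ.op ≫ k i' (γ ≫ τ))

def truncatedCone (j : SimplexCategory) (τ : j ⟶ ⦋1⦌) :
    Cone (StructuredArrow.proj (op j) (SimplexCategory.Truncated.inclusion n).op ⋙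
      (SimplexCategory.Truncated.inclusion n).op ⋙ Y) where
  pt := X.obj (op j)
  π.app a := X.map a.hom ≫ k a.right.unop.obj (a.hom.unop ≫ τ)
  π.naturality a b φ := by
    have h := hk a.right.unop.2 b.right.unop.2 φ.right.unop.hom (a.hom.unop ≫ τ)
    have hw : b.hom = a.hom ≫ φ.right.unop.hom.op := (StructuredArrow.w φ).symm
    show 𝟙 _ ≫ X.map b.hom ≫ k b.right.unop.obj (b.hom.unop ≫ τ) =
      (X.map a.hom ≫ k a.right.unop.obj (a.hom.unop ≫ τ)) ≫ Y.map φ.right.unop.hom.op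
    rw [Category.id_comp, hw, Category.assoc, h, X.map_comp, Category.assoc]
    rfl

variable (P : (Truncated.rightExtensionInclusion Y n).IsPointwiseRightKanExtension)

noncomputable def truncatedLift (j : SimplexCategory) (τ : j ⟶ ⦋1⦌) :
    X.obj (op j) ⟶ Y.obj (op j) :=
  (P (op j)).lift (truncatedCone k hk j τ)

lemma truncatedLift_comp_map (j : SimplexCategory) (τ : j ⟶ ⦋1⦌) {i : SimplexCategory}
    (hi : i.len ≤ n) (β : i ⟶ j) :
    truncatedLift k hk P j τ ≫ Y.map β.op = X.map β.op ≫ k i (β ≫ τ) :=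
  (congrArg (_ ≫ ·) (Category.comp_id _).symm).trans <|
    (P (op j)).fac (truncatedCone k hk j τ)
      (StructuredArrow.mk (Y := op (⟨i, hi⟩ : SimplexCategory.Truncated n)) β.op)

noncomputable def ofTruncated
    (hk₀ : ∀ i : SimplexCategory, i.len ≤ n → k i (const i ⦋1⦌ 0) = f.app (op i))
    (hk₁ : ∀ i : SimplexCategory, i.len ≤ n → k i (const i ⦋1⦌ 1) = g.app (op i)) :
    SimplicialHomotopy f g where
  h := truncatedLift k hk P
  compat {j' j} α τ := hom_ext_of_isPointwiseRightKanExtension P fun i hi β => by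
    rw [Category.assoc, ← Y.map_comp, ← op_comp, truncatedLift_comp_map k hk P j τ hi,
      Category.assoc (X.map α.op), truncatedLift_comp_map k hk P j' _ hi]
    simp only [op_comp, Functor.map_comp, Category.assoc]
  h_zero j := hom_ext_of_isPointwiseRightKanExtension P fun i hi β => by
    rw [truncatedLift_comp_map k hk P j _ hi, comp_const, hk₀ i hi]
    exact f.naturality β.op
  h_one j := hom_ext_of_isPointwiseRightKanExtension P fun i hi β => by
    rw [truncatedLift_comp_map k hk P j _ hi, comp_const, hk₁ i hi]
    exact g.naturality β.op

noncomputable def toId {X : SimplicialObject C}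
    (P : (Truncated.rightExtensionInclusion X n).IsPointwiseRightKanExtension) {u : X ⟶ X}
    (hu : ∀ p < n, u.app (op ⦋p⦌) = 𝟙 _) : SimplicialHomotopy u (𝟙 X) :=
  ofTruncated (homotopyToIdComponent u) (fun hi _ γ τ => homotopyToIdComponent_comp_map hu hi γ τ)
    P (fun i _ => by simp [homotopyToIdComponent, const_apply])
    (fun i _ => by simp [homotopyToIdComponent, const_apply])

end SimplicialHomotopy

end

theorem homotopyInverse_of_coskeletal_general {C : Type*} [Category C] [HasFiniteLimits C] (n : ℕ)
    [∀ (F : (SimplexCategory.Truncated n)ᵒᵖ ⥤ C),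
      (SimplexCategory.Truncated.inclusion n).op.HasRightKanExtension F]
    {A B : CategoryTheory.SimplicialObject C} (f : A ⟶ B) (g : B ⟶ A)
    (h1 : ∀ p : ℕ, p < n →
      f.app (op (SimplexCategory.mk p)) ≫ g.app (op (SimplexCategory.mk p)) = 𝟙 _ ∧
      g.app (op (SimplexCategory.mk p)) ≫ f.app (op (SimplexCategory.mk p)) = 𝟙 _)
    (hA : IsIso ((SimplicialObject.coskAdj n).unit.app A))
    (hB : IsIso ((SimplicialObject.coskAdj n).unit.app B)) :
    Nonempty (SimplicialHomotopy (g ≫ f) (𝟙 B)) ∧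
      Nonempty (SimplicialHomotopy (f ≫ g) (𝟙 A)) := by
  have : A.IsCoskeletal n := (isCoskeletal_iff_isIso A n).2 hA
  have : B.IsCoskeletal n := (isCoskeletal_iff_isIso B n).2 hB
  exact ⟨⟨.toId (isPointwiseRightKanExtensionOfIsCoskeletal n B) fun p hp => (h1 p hp).2⟩,
    ⟨.toId (isPointwiseRightKanExtensionOfIsCoskeletal n A) fun p hp => (h1 p hp).1⟩⟩

/-- If `f : A ⟶ B` and `g : B ⟶ A` are maps of `n`-coskeletal simplicial
objects which are mutually inverse in degrees `< n` and such that `g_n` is a section of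
`f_n`, then `f` and `g` are simplicial homotopy inverses of each other. -/
theorem homotopyInverse_of_coskeletal {C : Type*} [Category C] [HasFiniteLimits C] (n : ℕ)
    [∀ (F : (SimplexCategory.Truncated n)ᵒᵖ ⥤ C),
      (SimplexCategory.Truncated.inclusion n).op.HasRightKanExtension F]
    {A B : CategoryTheory.SimplicialObject C} (f : A ⟶ B) (g : B ⟶ A)
    (h1 : ∀ p : ℕ, p < n →
      f.app (op (SimplexCategory.mk p)) ≫ g.app (op (SimplexCategory.mk p)) = 𝟙 _ ∧
      g.app (op (SimplexCategory.mk p)) ≫ f.app (op (SimplexCategory.mk p)) = 𝟙 _)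
    (h2 : g.app (op (SimplexCategory.mk n)) ≫ f.app (op (SimplexCategory.mk n)) = 𝟙 _)
    (hA : IsIso ((SimplicialObject.coskAdj n).unit.app A))
    (hB : IsIso ((SimplicialObject.coskAdj n).unit.app B)) :
    Nonempty (SimplicialHomotopy (g ≫ f) (𝟙 B)) ∧
      Nonempty (SimplicialHomotopy (f ≫ g) (𝟙 A)) :=
  homotopyInverse_of_coskeletal_general n f g h1 hA hB

end Stmt3
end

section
/- Let f : K → L be a map of simplicial schemes (or simplicial objects in any category with finite limits) such that: (1) f_p : K_p → L_p is an isomorphism for all p < n, and (2) the canonical maps K → cosk_n K and L → cosk_n L are isomorphisms. Then for every m, the square expressing K_m and L_m as equalizers over the category D_m of injections [i] → [m] with i ≤ n is such that the canonical map K_m → L_m ×_{∏_{φ∈D_m} L_φ} ∏_{φ∈D_m} K_φ is an isomorphism; consequently each f_m is a base change (pullback) of a finite product of copies of f_n and of isomorphisms. -/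
/-!
An `n`-coskeletal `K` has `K_m` equal to the limit of `K` over the simplices `[k] → [m]` with
`k ≤ n`. Each such simplex factors uniquely as a degeneracy followed by a face `φ ∈ D_m`, so a map
`X ⟶ K_m` is the same as a family `b : X ⟶ ∏_φ K_φ` that is compatible along inclusions of faces;
in particular `kappa` is a monomorphism. For a point `(a, b)` of `L_m ×_{∏ L_φ} ∏ K_φ` the family
`b` is compatible: along a face of dimension `p < n` this may be checked after composing with the
isomorphism `f_p`, where it follows from naturality of `f` and the compatibility of `a`, and the
only face of dimension `n` of a face of dimension `n` is the identity. The resulting point of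
`K_m` is sent to `a` by `f_m` because `kappa` of `L` is a monomorphism as well.
-/

open CategoryTheory CategoryTheory.Limits Opposite

namespace Stmt6

/-- The objects of the category `D_m`: injective order-preserving maps `φ : [i] → [m]`
with `i ≤ n`. -/
def Phi (n m : ℕ) : Type :=
  Σ i : Fin (n + 1), { f : Fin ((i : ℕ) + 1) → Fin (m + 1) // Monotone f ∧ Function.Injective f }

instance (n m : ℕ) : Finite (Phi n m) := by unfold Phi; exact inferInstance
noncomputable instance (n m : ℕ) : Fintype (Phi n m) := Fintype.ofFinite _
noncomputable instance (n m : ℕ) : DecidableEq (Phi n m) := Classical.decEq _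

variable {C : Type*} [Category C] [HasFiniteLimits C] (n : ℕ)
  [∀ (F : (SimplexCategory.Truncated n)ᵒᵖ ⥤ C),
    (SimplexCategory.Truncated.inclusion n).op.HasRightKanExtension F]
  {K L : CategoryTheory.SimplicialObject C} (f : K ⟶ L) (m : ℕ)

/-- The canonical map `K_m ⟶ ∏_{φ ∈ D_m} K_φ` given by the simplicial structure maps. -/
noncomputable def kappa (K : CategoryTheory.SimplicialObject C) :
    K.obj (op (SimplexCategory.mk m)) ⟶
      (∏ᶜ fun φ : Phi n m => K.obj (op (SimplexCategory.mk (φ.1 : ℕ)))) :=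
  Pi.lift fun φ => K.map (SimplexCategory.mkHom ⟨φ.2.1, φ.2.2.1⟩).op

/-- The map `∏_φ K_φ ⟶ ∏_φ L_φ` induced by `f` componentwise. -/
noncomputable def prodMap :
    (∏ᶜ fun φ : Phi n m => K.obj (op (SimplexCategory.mk (φ.1 : ℕ)))) ⟶
      (∏ᶜ fun φ : Phi n m => L.obj (op (SimplexCategory.mk (φ.1 : ℕ)))) :=
  Pi.lift fun φ => Pi.π _ φ ≫ f.app (op (SimplexCategory.mk (φ.1 : ℕ)))

open SimplexCategory Simplicial

noncomputable section

-- Fresh `n m`, so that the Kan-extension instance on the outer `n` stays out of the lemmas below.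
variable {n m : ℕ}

instance : Finite (SimplexCategory.Truncated n) :=
  Finite.of_injective (fun Δ => (⟨Δ.obj.len, Nat.lt_succ_of_le Δ.property⟩ : Fin (n + 1)))
    fun _ _ h => ObjectProperty.FullSubcategory.ext (SimplexCategory.ext (congrArg Fin.val h))

instance (Y : SimplexCategoryᵒᵖ) :
    FinCategory (StructuredArrow Y (SimplexCategory.Truncated.inclusion n).op) where
  fintypeObj := by
    have : Finite (StructuredArrow Y (SimplexCategory.Truncated.inclusion n).op) :=
      Finite.of_injective (fun g => (⟨g.right.unop, g.hom.unop⟩ :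
        Σ Δ : SimplexCategory.Truncated n, Δ.obj ⟶ Y.unop)) fun g g' h => by
        obtain ⟨⟨⟨⟩⟩, r, u⟩ := g
        obtain ⟨⟨⟨⟩⟩, r', u'⟩ := g'
        obtain ⟨hr, hu⟩ := Sigma.mk.inj_iff.mp h
        obtain rfl := Opposite.unop_injective hr
        obtain rfl := Quiver.Hom.unop_inj (eq_of_heq hu)
        rfl
    exact Fintype.ofFinite _
  fintypeHom g g' := by
    have : Finite (g ⟶ g') := Finite.of_injective (fun u => u.right.unop.hom)
      fun _ _ h => StructuredArrow.hom_ext _ _ (Quiver.Hom.unop_inj (ObjectProperty.hom_ext _ h))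
    exact Fintype.ofFinite _

instance (F : (SimplexCategory.Truncated n)ᵒᵖ ⥤ C) :
    (SimplexCategory.Truncated.inclusion n).op.HasPointwiseRightKanExtension F :=
  fun _ => inferInstance

def isLimitConeAtOfIsCoskeletal (K : SimplicialObject C) [K.IsCoskeletal n]
    (Y : SimplexCategoryᵒᵖ) :
    IsLimit ((SimplicialObject.Truncated.rightExtensionInclusion K n).coneAt Y) :=
  Functor.isPointwiseRightKanExtensionOfIsRightKanExtension K _ Y

lemma coneAt_π_app {C : Type*} [Category C] (K : SimplicialObject C) {Y : SimplexCategoryᵒᵖ}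
    (g : StructuredArrow Y (SimplexCategory.Truncated.inclusion n).op) :
    ((SimplicialObject.Truncated.rightExtensionInclusion K n).coneAt Y).π.app g = K.map g.hom :=
  Category.comp_id _

namespace Phi

-- Reducible, so that rewriting sees `K.obj (op ⦋(ofMono hΔ i).1⦌)` as `K.obj (op Δ)`.
abbrev ofMono {Δ : SimplexCategory} (hΔ : Δ.len ≤ n) (i : Δ ⟶ ⦋m⦌) [Mono i] : Phi n m :=
  ⟨⟨Δ.len, Nat.lt_succ_of_le hΔ⟩, i.toOrderHom, i.toOrderHom.monotone,
    SimplexCategory.mono_iff_injective.mp ‹_›⟩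

def hom (φ : Phi n m) : ⦋(φ.1 : ℕ)⦌ ⟶ ⦋m⦌ := mkHom ⟨φ.2.1, φ.2.2.1⟩

instance (φ : Phi n m) : Mono φ.hom := SimplexCategory.mono_iff_injective.mpr φ.2.2.2

lemma len_le (φ : Phi n m) : (⦋(φ.1 : ℕ)⦌ : SimplexCategory).len ≤ n :=
  Nat.le_of_lt_succ φ.1.isLt

@[simp]
lemma hom_ofMono {Δ : SimplexCategory} (hΔ : Δ.len ≤ n) (i : Δ ⟶ ⦋m⦌) [Mono i] :
    (ofMono hΔ i).hom = i := by
  ext : 2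
  rfl

end Phi

lemma kappa_π (K : SimplicialObject C) (φ : Phi n m) :
    kappa n m K ≫ Pi.π _ φ = K.map φ.hom.op := by
  simp [kappa, Phi.hom]

lemma kappa_π_ofMono (K : SimplicialObject C) {Δ : SimplexCategory} (hΔ : Δ.len ≤ n)
    (i : Δ ⟶ ⦋m⦌) [Mono i] : kappa n m K ≫ Pi.π _ (Phi.ofMono hΔ i) = K.map i.op := by
  rw [kappa_π, Phi.hom_ofMono]

lemma prodMap_π (φ : Phi n m) :
    prodMap n f m ≫ Pi.π _ φ = Pi.π _ φ ≫ f.app (op ⦋(φ.1 : ℕ)⦌) := by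
  simp [prodMap]

lemma app_comp_kappa : f.app (op ⦋m⦌) ≫ kappa n m L = kappa n m K ≫ prodMap n f m :=
  Pi.hom_ext _ _ fun φ => by
    rw [Category.assoc, kappa_π, Category.assoc, prodMap_π, ← Category.assoc, kappa_π]
    exact (f.naturality _).symm

section Compatible

variable {X : C} (b : X ⟶ ∏ᶜ fun φ : Phi n m => K.obj (op ⦋(φ.1 : ℕ)⦌))

def component {Δ : SimplexCategory} (hΔ : Δ.len ≤ n) (i : Δ ⟶ ⦋m⦌) [Mono i] :
    X ⟶ K.obj (op Δ) :=
  b ≫ Pi.π _ (Phi.ofMono hΔ i)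

def IsCompatible : Prop :=
  ∀ ⦃Δ₁ Δ₂ : SimplexCategory⦄ (h₁ : Δ₁.len ≤ n) (h₂ : Δ₂.len ≤ n) (i : Δ₁ ⟶ ⦋m⦌) [Mono i]
    (μ : Δ₂ ⟶ Δ₁) [Mono μ], component b h₁ i ≫ K.map μ.op = component b h₂ (μ ≫ i)

lemma component_comp_app {a : X ⟶ L.obj (op ⦋m⦌)} (hab : a ≫ kappa n m L = b ≫ prodMap n f m)
    {Δ : SimplexCategory} (hΔ : Δ.len ≤ n) (i : Δ ⟶ ⦋m⦌) [Mono i] :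
    component b hΔ i ≫ f.app (op Δ) = a ≫ L.map i.op := by
  have := congrArg (· ≫ Pi.π _ (Phi.ofMono hΔ i)) hab
  simp only [Category.assoc, kappa_π_ofMono, prodMap_π] at this
  rw [component, Category.assoc]
  exact this.symm

lemma isCompatible_of_isIso (h1 : ∀ p : ℕ, p < n → IsIso (f.app (op (SimplexCategory.mk p))))
    {a : X ⟶ L.obj (op ⦋m⦌)} (hab : a ≫ kappa n m L = b ≫ prodMap n f m) :
    IsCompatible b := by
  intro Δ₁ Δ₂ h₁ h₂ i _ μ _
  rcases h₂.lt_or_eq with hlt | heq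
  · have : IsIso (f.app (op Δ₂)) := h1 _ hlt
    rw [← cancel_mono (f.app (op Δ₂)), Category.assoc, f.naturality,
      ← Category.assoc, component_comp_app f b hab, component_comp_app f b hab,
      Category.assoc, ← L.map_comp, ← op_comp]
  · obtain rfl : Δ₂ = Δ₁ :=
      SimplexCategory.ext (le_antisymm (len_le_of_mono μ) (h₁.trans heq.ge))
    obtain rfl := eq_id_of_mono μ
    simp only [op_id, K.map_id, Category.comp_id, Category.id_comp]

def leg {Δ : SimplexCategory} (hΔ : Δ.len ≤ n) (ψ : Δ ⟶ ⦋m⦌) : X ⟶ K.obj (op Δ) :=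
  component b ((len_le_of_epi (factorThruImage ψ)).trans hΔ) (image.ι ψ) ≫
    K.map (factorThruImage ψ).op

lemma leg_eq_of_fac {Δ Δ' : SimplexCategory} (hΔ : Δ.len ≤ n) (hΔ' : Δ'.len ≤ n)
    {ψ : Δ ⟶ ⦋m⦌} (e : Δ ⟶ Δ') [Epi e] (i : Δ' ⟶ ⦋m⦌) [Mono i] (fac : e ≫ i = ψ) :
    leg b hΔ ψ = component b hΔ' i ≫ K.map e.op := by
  obtain rfl := image_eq fac
  obtain rfl := image_ι_eq fac
  obtain rfl := factorThruImage_eq fac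
  rfl

lemma leg_comp_map (hb : IsCompatible b) {Δ₁ Δ₂ : SimplexCategory} (h₁ : Δ₁.len ≤ n)
    (h₂ : Δ₂.len ≤ n) (v : Δ₂ ⟶ Δ₁) (ψ : Δ₁ ⟶ ⦋m⦌) :
    leg b h₁ ψ ≫ K.map v.op = leg b h₂ (v ≫ ψ) := by
  have hIm : (image (v ≫ factorThruImage ψ)).len ≤ n :=
    (len_le_of_epi (factorThruImage _)).trans h₂
  rw [leg_eq_of_fac b h₂ hIm (factorThruImage (v ≫ factorThruImage ψ))
    (image.ι (v ≫ factorThruImage ψ) ≫ image.ι ψ) (by simp), ← hb _ hIm, leg,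
    Category.assoc, Category.assoc, ← K.map_comp, ← K.map_comp, ← op_comp, ← op_comp,
    image.fac]

lemma leg_hom (φ : Phi n m) : leg b φ.len_le φ.hom = b ≫ Pi.π _ φ := by
  rw [leg_eq_of_fac b φ.len_le φ.len_le (𝟙 _) φ.hom (Category.id_comp _), op_id, K.map_id,
    Category.comp_id]
  rfl

lemma comp_leg {Y : C} (t : Y ⟶ X) {Δ : SimplexCategory} (hΔ : Δ.len ≤ n) (ψ : Δ ⟶ ⦋m⦌) :
    t ≫ leg b hΔ ψ = leg (t ≫ b) hΔ ψ := by
  simp only [leg, component, Category.assoc]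

lemma leg_kappa {Δ : SimplexCategory} (hΔ : Δ.len ≤ n) (ψ : Δ ⟶ ⦋m⦌) :
    leg (kappa n m K) hΔ ψ = K.map ψ.op := by
  rw [leg, component, kappa_π_ofMono, ← K.map_comp, ← op_comp, image.fac]

def legCone (hb : IsCompatible b) :
    Cone (StructuredArrow.proj (op ⦋m⦌) (SimplexCategory.Truncated.inclusion n).op ⋙
      (SimplexCategory.Truncated.inclusion n).op ⋙ K) where
  pt := X
  π :=
    { app := fun g => leg b g.right.unop.property g.hom.unop
      naturality := fun g g' α => by
        have hw : g'.hom.unop = α.right.unop.hom ≫ g.hom.unop := by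
          rw [← StructuredArrow.w α]; rfl
        dsimp
        rw [Category.id_comp, hw]
        exact (leg_comp_map b hb _ _ _ _).symm }

variable [K.IsCoskeletal n]

def liftKappa (hb : IsCompatible b) : X ⟶ K.obj (op ⦋m⦌) :=
  (isLimitConeAtOfIsCoskeletal K _).lift (legCone b hb)

lemma liftKappa_comp_kappa (hb : IsCompatible b) : liftKappa b hb ≫ kappa n m K = b := by
  refine Pi.hom_ext _ _ fun φ => ?_
  have hfac := (isLimitConeAtOfIsCoskeletal K _).fac (legCone b hb)
    (StructuredArrow.mk (T := (SimplexCategory.Truncated.inclusion n).op)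
      (Y := op (⟨⦋(φ.1 : ℕ)⦌, φ.len_le⟩ : SimplexCategory.Truncated n)) φ.hom.op)
  rw [coneAt_π_app] at hfac
  calc (liftKappa b hb ≫ kappa n m K) ≫ Pi.π _ φ = liftKappa b hb ≫ K.map φ.hom.op := by
        rw [Category.assoc, kappa_π]
    _ = leg b φ.len_le φ.hom := hfac
    _ = b ≫ Pi.π _ φ := leg_hom b φ

end Compatible

instance mono_kappa (K : SimplicialObject C) [K.IsCoskeletal n] : Mono (kappa n m K) where
  right_cancellation t t' h := (isLimitConeAtOfIsCoskeletal K _).hom_ext fun g => by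
    rw [coneAt_π_app]
    change t ≫ K.map g.hom.unop.op = t' ≫ K.map g.hom.unop.op
    rw [← leg_kappa g.right.unop.property, comp_leg, comp_leg, h]

theorem isPullback_app_kappa (h1 : ∀ p : ℕ, p < n → IsIso (f.app (op (SimplexCategory.mk p))))
    [K.IsCoskeletal n] [L.IsCoskeletal n] :
    IsPullback (f.app (op ⦋m⦌)) (kappa n m K) (kappa n m L) (prodMap n f m) := by
  have hb (s : PullbackCone (kappa n m L) (prodMap n f m)) : IsCompatible s.snd :=
    isCompatible_of_isIso f s.snd h1 s.condition
  refine IsPullback.of_isLimit (PullbackCone.IsLimit.mk (app_comp_kappa f)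
    (fun s => liftKappa s.snd (hb s)) (fun s => ?_) (fun s => liftKappa_comp_kappa _ _)
    (fun s t _ ht => (cancel_mono (kappa n m K)).mp (ht.trans (liftKappa_comp_kappa _ _).symm)))
  rw [← cancel_mono (kappa n m L), Category.assoc, app_comp_kappa, ← Category.assoc,
    liftKappa_comp_kappa, s.condition]

end

/-- Let `f : K ⟶ L` be a map of `n`-coskeletal simplicial objects which is
an isomorphism in degrees `< n`.  Then for every `m` the canonical map
`K_m ⟶ L_m ×_{∏_φ L_φ} ∏_φ K_φ` is an isomorphism; in particular `f_m = lift ≫ pullback.fst`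
exhibits each `f_m` as a base change of a finite product of copies of `f_n` and of
isomorphisms. -/
theorem isIso_pullbackLift
    (h1 : ∀ p : ℕ, p < n → IsIso (f.app (op (SimplexCategory.mk p))))
    (hK : IsIso ((SimplicialObject.coskAdj n).unit.app K))
    (hL : IsIso ((SimplicialObject.coskAdj n).unit.app L))
    (w : f.app (op (SimplexCategory.mk m)) ≫ kappa n m L =
      kappa n m K ≫ prodMap n f m) :
    IsIso (pullback.lift (f.app (op (SimplexCategory.mk m))) (kappa n m K) w) ∧
      pullback.lift (f.app (op (SimplexCategory.mk m))) (kappa n m K) w ≫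
          pullback.fst (kappa n m L) (prodMap n f m) =
        f.app (op (SimplexCategory.mk m)) := by
  have : K.IsCoskeletal n := (SimplicialObject.isCoskeletal_iff_isIso K n).mpr hK
  have : L.IsCoskeletal n := (SimplicialObject.isCoskeletal_iff_isIso L n).mpr hL
  have hP := isPullback_app_kappa f h1 (m := m)
  have hlift : pullback.lift _ _ w = hP.isoPullback.hom :=
    pullback.hom_ext ((pullback.lift_fst _ _ _).trans hP.isoPullback_hom_fst.symm)
      ((pullback.lift_snd _ _ _).trans hP.isoPullback_hom_snd.symm)
  exact ⟨hlift ▸ inferInstance, pullback.lift_fst _ _ _⟩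

end Stmt6
end

section
/- Let Z_{•,•} be a bisimplicial abelian group, viewed as a first-quadrant double complex of abelian groups, such that all the face maps Z_{•,q+1} → Z_{•,q} between consecutive rows (viewed as maps of chain complexes) are quasi-isomorphisms inducing the same map on homology. Then the inclusion of the 0-th row Z_{•,0} into the total complex Tot(Z) is a quasi-isomorphism. -/
open CategoryTheory CategoryTheory.Limits AlgebraicTopology Opposite Simplicial

namespace Stmt13

noncomputable instance : Abelian (CategoryTheory.SimplicialObject AddCommGrpCat.{0}) := by
  dsimp only [CategoryTheory.SimplicialObject]; infer_instance

noncomputable instance : (alternatingFaceMapComplex AddCommGrpCat.{0}).Additive where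
  map_add := by
    intros X Y f g
    apply HomologicalComplex.hom_ext
    intro i
    rfl

variable (Z : CategoryTheory.SimplicialObject (CategoryTheory.SimplicialObject AddCommGrpCat.{0}))

/-- The double (first-quadrant, homological) complex associated to a bisimplicial abelian
group: the first index is the vertical (outer) simplicial degree `q`, the second the
horizontal (inner) one; the rows are the alternating face map complexes of the rows of `Z`
and the vertical differentials are alternating sums of the vertical face maps. -/
noncomputable def doubleComplex :
    HomologicalComplex₂ AddCommGrpCat.{0} (ComplexShape.down ℕ) (ComplexShape.down ℕ) :=
  ((alternatingFaceMapComplex AddCommGrpCat).mapHomologicalComplex (ComplexShape.down ℕ)).obj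
    ((alternatingFaceMapComplex (CategoryTheory.SimplicialObject AddCommGrpCat)).obj Z)

open HomologicalComplex₂

lemma cApply {X Y Z : AddCommGrpCat.{0}} (f : X ⟶ Y) (g : Y ⟶ Z) (x : X) : (f ≫ g) x = g (f x) := rfl
lemma zApply {X Y : AddCommGrpCat.{0}} (x : X) : (0 : X ⟶ Y) x = 0 := rfl
lemma fApply {X Y : AddCommGrpCat.{0}} (f : X ⟶ Y) (x : X) : (forget AddCommGrpCat).map f x = f x := rfl
lemma aApply {X Y : AddCommGrpCat.{0}} (f g : X ⟶ Y) (x : X) : (f + g) x = f x + g x := rfl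

lemma sum_apply {ι : Type} {X Y : AddCommGrpCat.{0}} (s : Finset ι) (f : ι → (X ⟶ Y)) (x : X) :
    (∑ j ∈ s, f j) x = ∑ j ∈ s, f j x := by
  classical
  induction s using Finset.induction with
  | empty => simp [zApply]
  | insert a s h ih => rw [Finset.sum_insert h, Finset.sum_insert h, aApply, ih]


section AbHomology

variable (S T : ShortComplex AddCommGrpCat.{0})

/-- class of a cycle in homology -/
noncomputable def hPi (x : S.X₂) (hx : S.g x = 0) : S.homology :=
  S.abLeftHomologyData.homologyIso.inv
    ((QuotientAddGroup.mk' _) (⟨x, hx⟩ : AddMonoidHom.ker S.g.hom))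

lemma hPi_surjective (h : S.homology) : ∃ x hx, hPi S x hx = h := by
  obtain ⟨y, hy⟩ := (ConcreteCategory.bijective_of_isIso S.abLeftHomologyData.homologyIso.inv).2 h
  obtain ⟨⟨x, hx⟩, rfl⟩ := QuotientAddGroup.mk'_surjective _ y
  exact ⟨x, hx, hy⟩

lemma mkKer_eq_zero_iff (x : S.X₂) (hx : S.g x = 0) :
    (QuotientAddGroup.mk' (AddMonoidHom.range S.abToCycles))
        (⟨x, hx⟩ : AddMonoidHom.ker S.g.hom) = 0 ↔ ∃ w, S.f w = x := by
  rw [QuotientAddGroup.mk'_apply, QuotientAddGroup.eq_zero_iff]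
  constructor
  · rintro ⟨w, hw⟩
    exact ⟨w, by simpa [Subtype.ext_iff] using hw⟩
  · rintro ⟨w, hw⟩
    exact ⟨w, by simpa [Subtype.ext_iff] using hw⟩

lemma hPi_eq_zero_iff (x : S.X₂) (hx : S.g x = 0) :
    hPi S x hx = 0 ↔ ∃ w, S.f w = x := by
  unfold hPi
  rw [← mkKer_eq_zero_iff S x hx]
  constructor
  · intro h
    have h2 := congrArg S.abLeftHomologyData.homologyIso.hom h
    rw [map_zero] at h2
    exact (Iso.inv_hom_id_apply S.abLeftHomologyData.homologyIso _).symm.trans h2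
  · intro h
    rw [h]
    exact map_zero _

lemma hPi_add (x y : S.X₂) (hx : S.g x = 0) (hy : S.g y = 0) :
    hPi S (x + y) (by rw [map_add, hx, hy, add_zero]) = hPi S x hx + hPi S y hy := by
  unfold hPi
  rw [show (⟨x + y, _⟩ : AddMonoidHom.ker S.g.hom) = ⟨x, hx⟩ + ⟨y, hy⟩ from rfl, map_add]
  exact map_add _ _ _

lemma hPi_eq_homologyπ (x : S.X₂) (hx : S.g x = 0) :
    hPi S x hx = S.homologyπ (S.abCyclesIso.inv ⟨x, hx⟩) := by
  have := congrArg (fun (f : S.abLeftHomologyData.K ⟶ S.homology) =>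
    f (⟨x, hx⟩ : AddMonoidHom.ker S.g.hom)) (S.abLeftHomologyData.π_comp_homologyIso_inv)
  simp only [cApply] at this
  exact this

variable {S T} in
lemma hPi_naturality (ψ : S ⟶ T) (x : S.X₂) (hx : S.g x = 0) :
    ShortComplex.homologyMap ψ (hPi S x hx) =
      hPi T (ψ.τ₂ x) (by
        have := congrArg (fun (f : S.X₂ ⟶ T.X₃) => f x) ψ.comm₂₃
        simp only [cApply] at this
        rw [this, hx, map_zero]) := by
  rw [hPi_eq_homologyπ, hPi_eq_homologyπ]
  have h1 := congrArg (fun (f : S.cycles ⟶ T.homology) => f (S.abCyclesIso.inv ⟨x, hx⟩))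
    (ShortComplex.homologyπ_naturality ψ)
  simp only [cApply] at h1
  rw [h1]
  congr 1
  apply (AddCommGrpCat.mono_iff_injective T.iCycles).1 inferInstance
  have h2 := congrArg (fun (f : S.cycles ⟶ T.X₂) => f (S.abCyclesIso.inv ⟨x, hx⟩))
    (ShortComplex.cyclesMap_i ψ)
  simp only [cApply] at h2
  rw [h2, ShortComplex.abCyclesIso_inv_apply_iCycles, ShortComplex.abCyclesIso_inv_apply_iCycles]

end AbHomology

section AbHomology2
variable {S T : ShortComplex AddCommGrpCat.{0}}
lemma hPi_congr (S : ShortComplex AddCommGrpCat.{0}) {x y : S.X₂} (h : x = y)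
    (hx : S.g x = 0) (hy : S.g y = 0) : hPi S x hx = hPi S y hy := by subst h; rfl

lemma hPi_sub (S : ShortComplex AddCommGrpCat.{0}) (x y : S.X₂) (hx : S.g x = 0) (hy : S.g y = 0) :
    hPi S (x - y) (by rw [map_sub, hx, hy, sub_zero]) = hPi S x hx - hPi S y hy := by
  have h0 : S.g (x - y) = 0 := by rw [map_sub, hx, hy, sub_zero]
  have h1 : hPi S x hx = hPi S (x - y) h0 + hPi S y hy := by
    rw [← hPi_add S (x - y) y h0 hy]
    exact hPi_congr S (sub_add_cancel x y).symm hx _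
  rw [h1]; abel

lemma ab_boundary_of_homologyMap_zero (ψ : S ⟶ T) (h : ShortComplex.homologyMap ψ = 0)
    (x : S.X₂) (hx : S.g x = 0) : ∃ w, T.f w = ψ.τ₂ x := by
  rw [← hPi_eq_zero_iff]
  have := hPi_naturality ψ x hx
  rw [h, zApply] at this
  exact this.symm

lemma ab_lift_of_isIso_homologyMap (ψ : S ⟶ T) [IsIso (ShortComplex.homologyMap ψ)]
    (x : S.X₂) (hx : S.g x = 0) (hw : ∃ w, T.f w = ψ.τ₂ x) : ∃ v, S.f v = x := by
  rw [← hPi_eq_zero_iff S x hx]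
  have hinj := (ConcreteCategory.bijective_of_isIso (ShortComplex.homologyMap ψ)).1
  apply hinj
  show ShortComplex.homologyMap ψ _ = ShortComplex.homologyMap ψ _
  rw [map_zero, hPi_naturality ψ x hx]
  rw [hPi_eq_zero_iff]
  exact hw

lemma ab_surj_of_isIso_homologyMap (ψ : S ⟶ T) [IsIso (ShortComplex.homologyMap ψ)]
    (y : T.X₂) (hy : T.g y = 0) : ∃ x, ∃ _ : S.g x = 0, ∃ w, ψ.τ₂ x = y + T.f w := by
  have hsurj := (ConcreteCategory.bijective_of_isIso (ShortComplex.homologyMap ψ)).2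
  obtain ⟨h, hh⟩ := hsurj (hPi T y hy)
  obtain ⟨x, hx, rfl⟩ := hPi_surjective S h
  rw [hPi_naturality ψ x hx] at hh
  have hgx : T.g (ψ.τ₂ x) = 0 := by
    have := congrArg (fun (f : S.X₂ ⟶ T.X₃) => f x) ψ.comm₂₃
    simp only [cApply] at this
    rw [this, hx, map_zero]
  have hsub : T.g (ψ.τ₂ x - y) = 0 := by rw [map_sub, hgx, hy, sub_zero]
  have h2 := (hPi_eq_zero_iff T (ψ.τ₂ x - y) hsub).1
    (by rw [hPi_sub T _ y hgx hy, hh, sub_self])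
  obtain ⟨w, hw⟩ := h2
  exact ⟨x, hx, w, by rw [hw]; abel⟩

lemma ab_isIso_homologyMap (ψ : S ⟶ T)
    (hinj : ∀ x (_ : S.g x = 0), (∃ w, T.f w = ψ.τ₂ x) → ∃ v, S.f v = x)
    (hsurj : ∀ y (_ : T.g y = 0), ∃ x, ∃ _ : S.g x = 0, ∃ w, ψ.τ₂ x = y + T.f w) :
    IsIso (ShortComplex.homologyMap ψ) := by
  rw [ConcreteCategory.isIso_iff_bijective]
  constructor
  · intro a b hab
    obtain ⟨x, hx, rfl⟩ := hPi_surjective S a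
    obtain ⟨x', hx', rfl⟩ := hPi_surjective S b
    have hd : S.g (x - x') = 0 := by rw [map_sub, hx, hx', sub_zero]
    rw [← sub_eq_zero, ← hPi_sub S x x' hx hx', hPi_eq_zero_iff]
    apply hinj _ hd
    have h3 : ShortComplex.homologyMap ψ (hPi S (x - x') hd) = 0 := by
      rw [hPi_sub S x x' hx hx', map_sub, hab, sub_self]
    rw [hPi_naturality ψ _ hd, hPi_eq_zero_iff] at h3
    exact h3
  · intro h
    obtain ⟨y, hy, rfl⟩ := hPi_surjective T h
    obtain ⟨x, hx, w, hw⟩ := hsurj y hy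
    refine ⟨hPi S x hx, ?_⟩
    rw [hPi_naturality ψ x hx]
    have hfw : T.g (T.f w) = 0 := by
      have := congrArg (fun (f : T.X₁ ⟶ T.X₃) => f w) T.zero
      simp only [cApply, zApply] at this
      exact this
    have h4 : hPi T (ψ.τ₂ x) (by rw [hw, map_add, hy, hfw, add_zero])
        = hPi T (y + T.f w) (by rw [map_add, hy, hfw, add_zero]) := hPi_congr T hw _ _
    rw [h4, hPi_add T y (T.f w) hy hfw]
    have h5 : hPi T (T.f w) hfw = 0 := by rw [hPi_eq_zero_iff]; exact ⟨w, rfl⟩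
    rw [h5, add_zero]


end AbHomology2

section Wrappers
variable {M N : HomologicalComplex AddCommGrpCat.{0} (ComplexShape.down ℕ)}

lemma down_next (i : ℕ) : (ComplexShape.down ℕ).next i = i - 1 := by
  cases i with
  | zero => exact ChainComplex.next_nat_zero
  | succ n => exact ChainComplex.next_nat_succ n

lemma down_prev (i : ℕ) : (ComplexShape.down ℕ).prev i = i + 1 := ChainComplex.prev ℕ i

lemma cx_boundary_of_homologyMap_zero (φ : M ⟶ N) (i : ℕ)
    (h : HomologicalComplex.homologyMap φ i = 0) (x : M.X i)
    (hx : M.d i ((ComplexShape.down ℕ).next i) x = 0) :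
    ∃ w : N.X ((ComplexShape.down ℕ).prev i), N.d ((ComplexShape.down ℕ).prev i) i w = φ.f i x :=
  ab_boundary_of_homologyMap_zero
    ((HomologicalComplex.shortComplexFunctor AddCommGrpCat (ComplexShape.down ℕ) i).map φ) h x hx

lemma cx_lift (φ : M ⟶ N) (i : ℕ) [inst : IsIso (HomologicalComplex.homologyMap φ i)]
    (x : M.X i) (hx : M.d i ((ComplexShape.down ℕ).next i) x = 0)
    (hw : ∃ w : N.X ((ComplexShape.down ℕ).prev i), N.d ((ComplexShape.down ℕ).prev i) i w = φ.f i x) :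
    ∃ v : M.X ((ComplexShape.down ℕ).prev i), M.d ((ComplexShape.down ℕ).prev i) i v = x := by
  have h2 : IsIso (ShortComplex.homologyMap
      ((HomologicalComplex.shortComplexFunctor AddCommGrpCat (ComplexShape.down ℕ) i).map φ)) := inst
  exact ab_lift_of_isIso_homologyMap
    ((HomologicalComplex.shortComplexFunctor AddCommGrpCat (ComplexShape.down ℕ) i).map φ) x hx hw

lemma cx_surj (φ : M ⟶ N) (i : ℕ) [inst : IsIso (HomologicalComplex.homologyMap φ i)]
    (y : N.X i) (hy : N.d i ((ComplexShape.down ℕ).next i) y = 0) :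
    ∃ x : M.X i, ∃ _ : M.d i ((ComplexShape.down ℕ).next i) x = 0,
      ∃ w : N.X ((ComplexShape.down ℕ).prev i), φ.f i x = y + N.d ((ComplexShape.down ℕ).prev i) i w := by
  have h2 : IsIso (ShortComplex.homologyMap
      ((HomologicalComplex.shortComplexFunctor AddCommGrpCat (ComplexShape.down ℕ) i).map φ)) := inst
  exact ab_surj_of_isIso_homologyMap
    ((HomologicalComplex.shortComplexFunctor AddCommGrpCat (ComplexShape.down ℕ) i).map φ) y hy

lemma cx_quasiIsoAt (φ : M ⟶ N) (i : ℕ)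
    (hinj : ∀ x : M.X i, M.d i ((ComplexShape.down ℕ).next i) x = 0 →
      (∃ w : N.X ((ComplexShape.down ℕ).prev i), N.d ((ComplexShape.down ℕ).prev i) i w = φ.f i x) →
      ∃ v : M.X ((ComplexShape.down ℕ).prev i), M.d ((ComplexShape.down ℕ).prev i) i v = x)
    (hsurj : ∀ y : N.X i, N.d i ((ComplexShape.down ℕ).next i) y = 0 →
      ∃ x : M.X i, ∃ _ : M.d i ((ComplexShape.down ℕ).next i) x = 0,
        ∃ w : N.X ((ComplexShape.down ℕ).prev i), φ.f i x = y + N.d ((ComplexShape.down ℕ).prev i) i w) :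
    QuasiIsoAt φ i := by
  rw [quasiIsoAt_iff_isIso_homologyMap]
  exact ab_isIso_homologyMap
    ((HomologicalComplex.shortComplexFunctor AddCommGrpCat (ComplexShape.down ℕ) i).map φ) hinj hsurj

end Wrappers

section TotalInfra

lemma pi_down (p q : ℕ) :
    ComplexShape.π (ComplexShape.down ℕ) (ComplexShape.down ℕ) (ComplexShape.down ℕ) (p, q)
      = p + q := rfl

lemma eps1_down (x : ℕ × ℕ) :
    ComplexShape.ε₁ (ComplexShape.down ℕ) (ComplexShape.down ℕ) (ComplexShape.down ℕ) x = 1 := rfl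

lemma notRelDown0 : ¬ (ComplexShape.down ℕ).Rel 0 ((ComplexShape.down ℕ).next 0) := by
  rw [ChainComplex.next_nat_zero]
  simp [ComplexShape.down_Rel]

lemma relDown (p : ℕ) : (ComplexShape.down ℕ).Rel (p+1) p := by simp [ComplexShape.down_Rel]

variable (K : HomologicalComplex₂ AddCommGrpCat.{0} (ComplexShape.down ℕ) (ComplexShape.down ℕ))
variable [K.HasTotal (ComplexShape.down ℕ)]

lemma total_d (n m : ℕ) :
    (K.total (ComplexShape.down ℕ)).d n m =
      K.D₁ (ComplexShape.down ℕ) n m + K.D₂ (ComplexShape.down ℕ) n m := rfl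

/-- projection onto the `(a,b)` component of the total complex in degree `n` -/
noncomputable def proj (a b n : ℕ) : ((K.total (ComplexShape.down ℕ)).X n) ⟶ ((K.X a).X b) :=
  K.totalDesc (fun p q _ => if h : p = a ∧ q = b then eqToHom (by rw [h.1, h.2]) else 0)

lemma ι_proj (p q a b n : ℕ)
    (h : ComplexShape.π (ComplexShape.down ℕ) (ComplexShape.down ℕ) (ComplexShape.down ℕ) (p, q) = n) :
    K.ιTotal (ComplexShape.down ℕ) p q n h ≫ proj K a b n =
      if h' : p = a ∧ q = b then eqToHom (by rw [h'.1, h'.2]) else 0 := by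
  simp [proj]

lemma ι_proj_self (a b n : ℕ)
    (h : ComplexShape.π (ComplexShape.down ℕ) (ComplexShape.down ℕ) (ComplexShape.down ℕ) (a, b) = n) :
    K.ιTotal (ComplexShape.down ℕ) a b n h ≫ proj K a b n = 𝟙 _ := by
  rw [ι_proj, dif_pos ⟨rfl, rfl⟩]
  rfl

lemma ιOrZero_proj (p q a b n : ℕ) :
    K.ιTotalOrZero (ComplexShape.down ℕ) p q n ≫ proj K a b n =
      if h' : p = a ∧ q = b ∧ p + q = n then eqToHom (by rw [h'.1, h'.2.1]) else 0 := by
  by_cases hn : ComplexShape.π (ComplexShape.down ℕ) (ComplexShape.down ℕ)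
      (ComplexShape.down ℕ) (p, q) = n
  · rw [K.ιTotalOrZero_eq _ _ _ _ hn, ι_proj K p q a b n hn]
    rw [pi_down] at hn
    by_cases h1 : p = a ∧ q = b
    · rw [dif_pos h1, dif_pos ⟨h1.1, h1.2, hn⟩]
    · rw [dif_neg h1, dif_neg (fun h2 => h1 ⟨h2.1, h2.2.1⟩)]
  · rw [K.ιTotalOrZero_eq_zero _ _ _ _ hn, zero_comp, dif_neg]
    rintro ⟨h1, h2, h3⟩
    exact hn (by rw [pi_down]; exact h3)

lemma total_decomp (n : ℕ) (x : (K.total (ComplexShape.down ℕ)).X n) :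
    x = ∑ j ∈ Finset.range (n+1),
      (K.ιTotalOrZero (ComplexShape.down ℕ) j (n-j) n) (proj K j (n-j) n x) := by
  have hm : (𝟙 ((K.total (ComplexShape.down ℕ)).X n)) = ∑ j ∈ Finset.range (n+1),
      proj K j (n-j) n ≫ K.ιTotalOrZero (ComplexShape.down ℕ) j (n-j) n := by
    apply total.hom_ext
    intro p q hpq
    rw [Category.comp_id, Preadditive.comp_sum]
    have hpn : p + q = n := by rw [pi_down] at hpq; exact hpq
    have hq : q = n - p := by omega
    subst hq
    rw [Finset.sum_eq_single p]
    · rw [K.ιTotalOrZero_eq _ _ _ _ (by rw [pi_down]; omega),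
        ← Category.assoc, ι_proj_self, Category.id_comp]
    · intro j _ hj
      rw [← Category.assoc, ι_proj, dif_neg (fun h2 => hj (h2.1.symm)), zero_comp]
    · intro hp
      exact absurd (by omega : p < n + 1) (by simpa using hp)
  have := congrArg (fun (f : (K.total (ComplexShape.down ℕ)).X n ⟶
      (K.total (ComplexShape.down ℕ)).X n) => f x) hm
  simp only [sum_apply, cApply] at this
  simpa using this

lemma D_proj (a b n : ℕ) (hn : a + b + 1 = n) :
    (K.total (ComplexShape.down ℕ)).d n (a+b) ≫ proj K a b (a+b)
      = (proj K (a+1) b n ≫ (K.d (a+1) a).f b)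
        + (ComplexShape.ε₂ (ComplexShape.down ℕ) (ComplexShape.down ℕ) (ComplexShape.down ℕ)
            (a, b+1)) • (proj K a (b+1) n ≫ (K.X a).d (b+1) b) := by
  subst hn
  apply total.hom_ext
  intro p q hpq
  have hpn : p + q = a + b + 1 := by rw [pi_down] at hpq; exact hpq
  have hd₁ : K.d₁ (ComplexShape.down ℕ) p q (a+b) ≫ proj K a b (a+b)
      = if h : p = a + 1 ∧ q = b then
          eqToHom (by rw [h.1, h.2]) ≫ (K.d (a+1) a).f b else 0 := by
    cases p with
    | zero =>
      rw [K.d₁_eq_zero _ _ _ _ notRelDown0, zero_comp, dif_neg (by omega)]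
    | succ p' =>
      rw [K.d₁_eq' _ (relDown p') q (a+b), Linear.units_smul_comp, Category.assoc,
        ιOrZero_proj, eps1_down, one_smul]
      by_cases h1 : p' = a ∧ q = b
      · obtain ⟨rfl, rfl⟩ := h1
        rw [dif_pos ⟨rfl, rfl, by omega⟩, dif_pos ⟨rfl, rfl⟩]
        simp
      · rw [dif_neg (fun h2 => h1 ⟨h2.1, h2.2.1⟩), dif_neg (by omega), comp_zero]
  have hd₂ : K.d₂ (ComplexShape.down ℕ) p q (a+b) ≫ proj K a b (a+b)
      = if h : p = a ∧ q = b + 1 then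
          (ComplexShape.ε₂ (ComplexShape.down ℕ) (ComplexShape.down ℕ) (ComplexShape.down ℕ)
            (a, b+1)) • (eqToHom (by rw [h.1, h.2]) ≫ (K.X a).d (b+1) b) else 0 := by
    cases q with
    | zero =>
      rw [K.d₂_eq_zero _ _ _ _ notRelDown0, zero_comp, dif_neg (by omega)]
    | succ q' =>
      rw [K.d₂_eq' _ p (relDown q') (a+b), Linear.units_smul_comp, Category.assoc,
        ιOrZero_proj]
      by_cases h1 : p = a ∧ q' = b
      · obtain ⟨rfl, rfl⟩ := h1
        rw [dif_pos ⟨rfl, rfl, by omega⟩, dif_pos ⟨rfl, rfl⟩]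
        simp
      · rw [dif_neg (fun h2 => h1 ⟨h2.1, h2.2.1⟩), dif_neg (by omega), comp_zero, smul_zero]
  rw [total_d]
  simp only [Preadditive.comp_add, Preadditive.add_comp, Linear.comp_units_smul,
    ← Category.assoc, ι_D₁, ι_D₂]
  rw [hd₁, hd₂, ι_proj, ι_proj]
  by_cases h1 : p = a + 1 ∧ q = b
  · obtain ⟨rfl, rfl⟩ := h1
    rw [dif_pos ⟨rfl, rfl⟩, dif_neg (by omega), dif_pos ⟨rfl, rfl⟩, dif_neg (by omega)]
    simp
  · rw [dif_neg h1, dif_neg h1]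
    by_cases h2 : p = a ∧ q = b + 1
    · obtain ⟨rfl, rfl⟩ := h2
      rw [dif_pos ⟨rfl, rfl⟩, dif_pos ⟨rfl, rfl⟩]
      simp
    · rw [dif_neg h2, dif_neg h2]
      simp

end TotalInfra

section Elementwise
open HomologicalComplex₂

lemma uApply {X Y : AddCommGrpCat.{0}} (u : ℤˣ) (f : X ⟶ Y) (x : X) : (u • f) x = u • (f x) := rfl

lemma hom_usmul {X Y : AddCommGrpCat.{0}} (f : X ⟶ Y) (u : ℤˣ) (x : X) :
    f (u • x) = u • f x := by
  rw [Units.smul_def, Units.smul_def, map_zsmul]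

variable (K : HomologicalComplex₂ AddCommGrpCat.{0} (ComplexShape.down ℕ) (ComplexShape.down ℕ))
variable [K.HasTotal (ComplexShape.down ℕ)]

lemma proj_eq_zero (a b n : ℕ) (h : a + b ≠ n) : proj K a b n = 0 := by
  apply HomologicalComplex₂.total.hom_ext
  intro p q hpq
  rw [ι_proj, comp_zero, dif_neg]
  rintro ⟨rfl, rfl⟩
  rw [pi_down] at hpq
  exact h hpq

lemma D_proj_apply (a b n : ℕ) (hn : a + b + 1 = n) (x : (K.total (ComplexShape.down ℕ)).X n) :
    proj K a b (a+b) ((K.total (ComplexShape.down ℕ)).d n (a+b) x)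
      = (K.d (a+1) a).f b (proj K (a+1) b n x)
        + (ComplexShape.ε₂ (ComplexShape.down ℕ) (ComplexShape.down ℕ) (ComplexShape.down ℕ)
            (a, b+1)) • ((K.X a).d (b+1) b (proj K a (b+1) n x)) := by
  have := congrArg (fun (f : (K.total (ComplexShape.down ℕ)).X n ⟶ (K.X a).X b) => f x)
    (D_proj K a b n hn)
  simp only [cApply, aApply, uApply] at this
  exact this

lemma proj_ι_self (a b n : ℕ)
    (h : ComplexShape.π (ComplexShape.down ℕ) (ComplexShape.down ℕ) (ComplexShape.down ℕ) (a, b) = n)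
    (z : (K.X a).X b) :
    proj K a b n (K.ιTotal (ComplexShape.down ℕ) a b n h z) = z := by
  have := congrArg (fun (f : (K.X a).X b ⟶ (K.X a).X b) => f z) (ι_proj_self K a b n h)
  simp only [cApply] at this
  exact this

lemma proj_ι_ne (p q a b n : ℕ)
    (h : ComplexShape.π (ComplexShape.down ℕ) (ComplexShape.down ℕ) (ComplexShape.down ℕ) (p, q) = n)
    (hne : ¬ (p = a ∧ q = b)) (z : (K.X p).X q) :
    proj K a b n (K.ιTotal (ComplexShape.down ℕ) p q n h z) = 0 := by
  have := congrArg (fun (f : (K.X p).X q ⟶ (K.X a).X b) => f z) (ι_proj K p q a b n h)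
  simp only [cApply] at this
  rw [this, dif_neg hne, zApply]

/-- `x` is supported in rows `≤ r` -/
def SuppLe (r n : ℕ) (x : (K.total (ComplexShape.down ℕ)).X n) : Prop :=
  ∀ a b, r < a → proj K a b n x = 0

end Elementwise

section Descent
open HomologicalComplex₂



variable (K : HomologicalComplex₂ AddCommGrpCat.{0} (ComplexShape.down ℕ) (ComplexShape.down ℕ))
variable [K.HasTotal (ComplexShape.down ℕ)]

lemma descent_step (r m : ℕ) (hr : 1 ≤ r)
    (HI : ∀ s b : ℕ, Odd s → IsIso (HomologicalComplex.homologyMap (K.d (s+1) s) b))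
    (x : (K.total (ComplexShape.down ℕ)).X m)
    (hx : SuppLe K r m x)
    (hD : ∀ a b : ℕ, 1 ≤ a → a + b + 1 = m →
      proj K a b (a+b) ((K.total (ComplexShape.down ℕ)).d m (a+b) x) = 0) :
    ∃ u : (K.total (ComplexShape.down ℕ)).X (m+1),
      SuppLe K (r-1) m (x - (K.total (ComplexShape.down ℕ)).d (m+1) m u) := by
  by_cases hrm : m < r
  · refine ⟨0, fun a b ha => ?_⟩
    rw [map_zero, sub_zero]
    by_cases hab : a + b = m
    · exact absurd hab (by omega)
    · rw [proj_eq_zero K a b m hab, zApply]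
  push_neg at hrm
  obtain ⟨b0, hb0⟩ : ∃ b0, r + b0 = m := ⟨m - r, by omega⟩
  set z := proj K r b0 m x with hzdef
  have hz : (K.X r).d b0 ((ComplexShape.down ℕ).next b0) z = 0 := by
    cases b0 with
    | zero =>
      rw [(K.X r).shape _ _ notRelDown0, zApply]
    | succ b' =>
      rw [ChainComplex.next_nat_succ]
      have h1 := hD r b' (by omega) (by omega)
      have h2 := D_proj_apply K r b' m (by omega) x
      rw [h1] at h2
      have h3 : proj K (r+1) b' m x = 0 := hx (r+1) b' (by omega)
      rw [h3, map_zero, zero_add] at h2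
      have h4 := congrArg (fun t => (ComplexShape.ε₂ (ComplexShape.down ℕ) (ComplexShape.down ℕ)
        (ComplexShape.down ℕ) (r, b'+1))⁻¹ • t) h2.symm
      simpa [smul_smul] using h4
  rcases Nat.even_or_odd r with hre | hro
  · -- r even, write r = s+1 with s odd
    obtain ⟨s, rfl⟩ : ∃ s, r = s + 1 := ⟨r - 1, by omega⟩
    have hso : Odd s := by rwa [Nat.even_add_one, Nat.not_even_iff_odd] at hre
    have hs1 : 1 ≤ s := hso.pos
    have hvb : ∃ w : (K.X s).X ((ComplexShape.down ℕ).prev b0),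
        (K.X s).d ((ComplexShape.down ℕ).prev b0) b0 w = (K.d (s+1) s).f b0 z := by
      rw [down_prev]
      have h1 := hD s b0 (by omega) (by omega)
      have h2 := D_proj_apply K s b0 m (by omega) x
      rw [h1] at h2
      refine ⟨-((ComplexShape.ε₂ (ComplexShape.down ℕ) (ComplexShape.down ℕ)
        (ComplexShape.down ℕ) (s, b0+1)) • proj K s (b0+1) m x), ?_⟩
      rw [map_neg, hom_usmul]
      exact (eq_neg_of_add_eq_zero_left h2.symm).symm
    haveI : IsIso (HomologicalComplex.homologyMap (K.d (s+1) s) b0) := HI s b0 hso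
    have hlift := cx_lift (K.d (s+1) s) b0 z hz hvb
    rw [down_prev] at hlift
    obtain ⟨v, hv⟩ := hlift
    set u := K.ιTotal (ComplexShape.down ℕ) (s+1) (b0+1) (m+1) (by rw [pi_down]; omega)
      (((ComplexShape.ε₂ (ComplexShape.down ℕ) (ComplexShape.down ℕ)
        (ComplexShape.down ℕ) (s+1, b0+1)))⁻¹ • v) with hu
    refine ⟨u, fun a b ha => ?_⟩
    have ha' : s + 1 ≤ a := by omega
    by_cases hab : a + b = m
    swap
    · rw [proj_eq_zero K a b m hab, zApply]
    rw [map_sub]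
    have hDu := D_proj_apply K a b (m+1) (by omega) u
    rw [show a + b = m from hab] at hDu
    rw [hDu]
    have e1 : proj K (a+1) b (m+1) u = 0 := by
      rw [hu]
      exact proj_ι_ne K (s+1) (b0+1) (a+1) b (m+1) _ (by rintro ⟨h1', h2'⟩; omega) _
    rw [e1, map_zero, zero_add]
    by_cases haa : a = s + 1
    · subst haa
      have hbb : b = b0 := by omega
      subst hbb
      have e2 : proj K (s+1) (b+1) (m+1) u = ((ComplexShape.ε₂ (ComplexShape.down ℕ)
          (ComplexShape.down ℕ) (ComplexShape.down ℕ) (s+1, b+1)))⁻¹ • v := by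
        rw [hu]; exact proj_ι_self K _ _ _ _ _
      rw [e2, hom_usmul, smul_smul, mul_inv_cancel, one_smul, hv, hzdef, sub_self]
    · have e2 : proj K a (b+1) (m+1) u = 0 := by
        rw [hu]
        exact proj_ι_ne K (s+1) (b0+1) a (b+1) (m+1) _
          (by rintro ⟨h1', h2'⟩; exact haa h1'.symm) _
      rw [e2, map_zero, smul_zero, sub_zero]
      exact hx a b (by omega)
  · -- r odd
    haveI : IsIso (HomologicalComplex.homologyMap (K.d (r+1) r) b0) := HI r b0 hro
    have hres := cx_surj (K.d (r+1) r) b0 z hz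
    rw [down_prev, down_next] at hres
    obtain ⟨w, hwcyc, t, hwt⟩ := hres
    set u := K.ιTotal (ComplexShape.down ℕ) (r+1) b0 (m+1) (by rw [pi_down]; omega) w
      + K.ιTotal (ComplexShape.down ℕ) r (b0+1) (m+1) (by rw [pi_down]; omega)
        (-(((ComplexShape.ε₂ (ComplexShape.down ℕ) (ComplexShape.down ℕ)
          (ComplexShape.down ℕ) (r, b0+1)))⁻¹ • t)) with hu
    refine ⟨u, fun a b ha => ?_⟩
    have ha' : r ≤ a := by omega
    by_cases hab : a + b = m
    swap
    · rw [proj_eq_zero K a b m hab, zApply]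
    rw [map_sub]
    have hDu := D_proj_apply K a b (m+1) (by omega) u
    rw [show a + b = m from hab] at hDu
    rw [hDu]
    by_cases haa : a = r
    · -- the top row gets killed
      subst haa
      have hbb : b = b0 := by omega
      subst hbb
      have e1 : proj K (a+1) b (m+1) u = w := by
        rw [hu, map_add, proj_ι_self,
          proj_ι_ne K a (b+1) (a+1) b (m+1) _ (by rintro ⟨h1', h2'⟩; omega) _, add_zero]
      have e2 : proj K a (b+1) (m+1) u = -(((ComplexShape.ε₂ (ComplexShape.down ℕ)
          (ComplexShape.down ℕ) (ComplexShape.down ℕ) (a, b+1)))⁻¹ • t) := by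
        rw [hu, map_add, proj_ι_ne K (a+1) b a (b+1) (m+1) _ (by rintro ⟨h1', h2'⟩; omega) _,
          zero_add]
        exact proj_ι_self K _ _ _ _ _
      rw [e1, e2, hwt, map_neg, hom_usmul, smul_neg, smul_smul, mul_inv_cancel, one_smul,
        hzdef]
      abel
    · by_cases hab2 : a = r + 1
      · -- row r+1 : horizontal cycle condition kills the new contribution
        subst hab2
        have hbb : b + 1 = b0 := by omega
        subst hbb
        have e1 : proj K (r+1+1) b (m+1) u = 0 := by
          rw [hu, map_add,
            proj_ι_ne K (r+1) (b+1) (r+1+1) b (m+1) _ (by rintro ⟨h1', h2'⟩; omega) _,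
            proj_ι_ne K r (b+1+1) (r+1+1) b (m+1) _ (by rintro ⟨h1', h2'⟩; omega) _, add_zero]
        have e2 : proj K (r+1) (b+1) (m+1) u = w := by
          rw [hu, map_add,
            proj_ι_ne K r (b+1+1) (r+1) (b+1) (m+1) _ (by rintro ⟨h1', h2'⟩; omega) _, add_zero]
          exact proj_ι_self K _ _ _ _ _
        have hwcyc' : (K.X (r+1)).d (b+1) b w = 0 := by simpa using hwcyc
        rw [e1, e2, map_zero, zero_add, hwcyc', smul_zero, sub_zero]
        exact hx (r+1) b (by omega)
      · -- rows above r+1 : nothing changes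
        have e1 : proj K (a+1) b (m+1) u = 0 := by
          rw [hu, map_add,
            proj_ι_ne K (r+1) b0 (a+1) b (m+1) _ (by rintro ⟨h1', h2'⟩; omega) _,
            proj_ι_ne K r (b0+1) (a+1) b (m+1) _ (by rintro ⟨h1', h2'⟩; omega) _, add_zero]
        have e2 : proj K a (b+1) (m+1) u = 0 := by
          rw [hu, map_add,
            proj_ι_ne K (r+1) b0 a (b+1) (m+1) _ (by rintro ⟨h1', h2'⟩; omega) _,
            proj_ι_ne K r (b0+1) a (b+1) (m+1) _ (by rintro ⟨h1', h2'⟩; omega) _, add_zero]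
        rw [e1, e2, map_zero, map_zero, smul_zero, add_zero, sub_zero]
        exact hx a b (by omega)

end Descent

section Descent2
open HomologicalComplex₂
variable (K : HomologicalComplex₂ AddCommGrpCat.{0} (ComplexShape.down ℕ) (ComplexShape.down ℕ))
variable [K.HasTotal (ComplexShape.down ℕ)]

lemma descent (r m : ℕ)
    (HI : ∀ s b : ℕ, Odd s → IsIso (HomologicalComplex.homologyMap (K.d (s+1) s) b))
    (x : (K.total (ComplexShape.down ℕ)).X m)
    (hx : SuppLe K r m x)
    (hD : ∀ a b : ℕ, 1 ≤ a → a + b + 1 = m →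
      proj K a b (a+b) ((K.total (ComplexShape.down ℕ)).d m (a+b) x) = 0) :
    ∃ u : (K.total (ComplexShape.down ℕ)).X (m+1),
      SuppLe K 0 m (x - (K.total (ComplexShape.down ℕ)).d (m+1) m u) := by
  induction r generalizing x with
  | zero =>
    refine ⟨0, ?_⟩
    rwa [map_zero, sub_zero]
  | succ r ih =>
    obtain ⟨u₁, h₁⟩ := descent_step K (r+1) m (by omega) HI x hx hD
    have hD' : ∀ a b : ℕ, 1 ≤ a → a + b + 1 = m →
        proj K a b (a+b) ((K.total (ComplexShape.down ℕ)).d m (a+b)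
          (x - (K.total (ComplexShape.down ℕ)).d (m+1) m u₁)) = 0 := by
      intro a b ha hab
      have hz : (K.total (ComplexShape.down ℕ)).d m (a+b)
          ((K.total (ComplexShape.down ℕ)).d (m+1) m u₁) = 0 := by
        have := congrArg (fun (f : (K.total (ComplexShape.down ℕ)).X (m+1) ⟶
          (K.total (ComplexShape.down ℕ)).X (a+b)) => f u₁)
          ((K.total (ComplexShape.down ℕ)).d_comp_d (m+1) m (a+b))
        simp only [cApply, zApply] at this
        exact this
      rw [map_sub, hz, sub_zero, hD a b ha hab]
    have h₁' : SuppLe K r m (x - (K.total (ComplexShape.down ℕ)).d (m+1) m u₁) := by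
      simpa using h₁
    obtain ⟨u₂, h₂⟩ := ih _ h₁' hD'
    refine ⟨u₁ + u₂, fun a b ha => ?_⟩
    have h3 := h₂ a b ha
    rw [sub_sub] at h3
    rw [map_add]
    exact h3

lemma eps2_zero (q : ℕ) :
    ComplexShape.ε₂ (ComplexShape.down ℕ) (ComplexShape.down ℕ) (ComplexShape.down ℕ) (0, q)
      = 1 := by
  show (ComplexShape.down ℕ).ε 0 = 1
  exact ComplexShape.ε_zero _

/-- The inclusion of the 0-th row into the total complex. -/
noncomputable def rowZeroIncl : (K.X 0) ⟶ K.total (ComplexShape.down ℕ) where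
  f n := K.ιTotal (ComplexShape.down ℕ) 0 n n (by rw [pi_down]; omega)
  comm' i j hij := by
    obtain rfl : i = j + 1 := by
      simpa [ComplexShape.down_Rel] using hij.symm
    rw [total_d, Preadditive.comp_add, ι_D₁, ι_D₂,
      K.d₁_eq_zero _ _ _ _ notRelDown0, zero_add,
      K.d₂_eq _ _ (relDown j) _ (by rw [pi_down]; omega), eps2_zero, one_smul]

end Descent2

section Vert
lemma neg_one_pow_sum (k : ℕ) :
    (∑ i : Fin k, (-1 : ℤ) ^ (i : ℕ)) = if Even k then 0 else 1 := by
  rw [Fin.sum_univ_eq_sum_range]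
  exact neg_one_geom_sum

lemma doubleComplex_d (s : ℕ) :
    (doubleComplex Z).d (s+1) s
      = ∑ i : Fin (s+2), ((-1:ℤ)^(i : ℕ) •
          (alternatingFaceMapComplex AddCommGrpCat).map (Z.δ i)) := by
  show (alternatingFaceMapComplex AddCommGrpCat).map
    (((alternatingFaceMapComplex (CategoryTheory.SimplicialObject AddCommGrpCat)).obj Z).d (s+1) s) = _
  rw [alternatingFaceMapComplex_obj_d]
  show (alternatingFaceMapComplex AddCommGrpCat).map (∑ i : Fin (s+2), (-1:ℤ)^(i:ℕ) • Z.δ i) = _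
  rw [Functor.map_sum]
  congr 1

lemma homologyMap_doubleComplex_d (s k : ℕ)
    (heq : ∀ (q : ℕ) (i j : Fin (q + 2)) (k : ℕ),
      (HomologicalComplex.homologyFunctor AddCommGrpCat (ComplexShape.down ℕ) k).map
          ((alternatingFaceMapComplex AddCommGrpCat).map (Z.δ i)) =
        (HomologicalComplex.homologyFunctor AddCommGrpCat (ComplexShape.down ℕ) k).map
          ((alternatingFaceMapComplex AddCommGrpCat).map (Z.δ j))) :
    HomologicalComplex.homologyMap ((doubleComplex Z).d (s+1) s) k =
      if Even s then 0
      else HomologicalComplex.homologyMap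
        ((alternatingFaceMapComplex AddCommGrpCat).map (Z.δ (0 : Fin (s+2)))) k := by
  have e1 : HomologicalComplex.homologyMap ((doubleComplex Z).d (s+1) s) k
      = (HomologicalComplex.homologyFunctor AddCommGrpCat (ComplexShape.down ℕ) k).map
          ((doubleComplex Z).d (s+1) s) := rfl
  rw [e1]
  have e1' : (HomologicalComplex.homologyFunctor AddCommGrpCat (ComplexShape.down ℕ) k).map
      ((doubleComplex Z).d (s+1) s)
      = (HomologicalComplex.homologyFunctor AddCommGrpCat (ComplexShape.down ℕ) k).map
        (∑ i : Fin (s+2), ((-1:ℤ)^(i : ℕ) •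
          (alternatingFaceMapComplex AddCommGrpCat).map (Z.δ i))) :=
    congrArg (HomologicalComplex.homologyFunctor AddCommGrpCat (ComplexShape.down ℕ) k).map
      (doubleComplex_d Z s)
  rw [e1', Functor.map_sum]
  have e2 : ∀ i : Fin (s+2),
      (HomologicalComplex.homologyFunctor AddCommGrpCat (ComplexShape.down ℕ) k).map
        ((-1:ℤ)^(i:ℕ) • (alternatingFaceMapComplex AddCommGrpCat).map (Z.δ i))
      = (-1:ℤ)^(i:ℕ) • (HomologicalComplex.homologyFunctor AddCommGrpCat (ComplexShape.down ℕ) k).map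
          ((alternatingFaceMapComplex AddCommGrpCat).map (Z.δ (0 : Fin (s+2)))) := by
    intro i
    rw [Functor.map_zsmul, heq s i 0 k]
  rw [Finset.sum_congr rfl (fun i _ => e2 i), ← Finset.sum_smul, neg_one_pow_sum]
  have : Even (s + 2) ↔ Even s := by
    simp [Nat.even_add]
  rw [if_congr this rfl rfl]
  split
  · rw [zero_smul]
    rfl
  · rw [one_smul]
    rfl

end Vert

section Main

/-- Let `Z` be a bisimplicial abelian group such that all vertical face
maps between consecutive rows induce quasi-isomorphisms of the row complexes which are all
equal on homology.  Then the inclusion of the `0`-th row into the total complex is a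
quasi-isomorphism. -/
theorem row_zero_inclusion_quasiIso
    [(doubleComplex Z).HasTotal (ComplexShape.down ℕ)]
    (hqis : ∀ (q : ℕ) (i : Fin (q + 2)),
      QuasiIso ((alternatingFaceMapComplex AddCommGrpCat).map (Z.δ i)))
    (heq : ∀ (q : ℕ) (i j : Fin (q + 2)) (k : ℕ),
      (HomologicalComplex.homologyFunctor AddCommGrpCat (ComplexShape.down ℕ) k).map
          ((alternatingFaceMapComplex AddCommGrpCat).map (Z.δ i)) =
        (HomologicalComplex.homologyFunctor AddCommGrpCat (ComplexShape.down ℕ) k).map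
          ((alternatingFaceMapComplex AddCommGrpCat).map (Z.δ j))) :
    ∃ φ : (doubleComplex Z).X 0 ⟶ (doubleComplex Z).total (ComplexShape.down ℕ),
      (∀ (n : ℕ) (h : ComplexShape.π (ComplexShape.down ℕ) (ComplexShape.down ℕ)
          (ComplexShape.down ℕ) (0, n) = n),
        φ.f n = (doubleComplex Z).ιTotal (ComplexShape.down ℕ) 0 n n h) ∧
      QuasiIso φ := by
  classical
  refine ⟨rowZeroIncl (doubleComplex Z), ⟨fun n h => rfl, ?_⟩⟩
  have HI : ∀ s b : ℕ, Odd s →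
      IsIso (HomologicalComplex.homologyMap ((doubleComplex Z).d (s+1) s) b) := by
    intro s b hs
    rw [homologyMap_doubleComplex_d Z s b heq, if_neg (Nat.not_even_iff_odd.mpr hs)]
    haveI := hqis s 0
    have h2 : QuasiIsoAt ((alternatingFaceMapComplex AddCommGrpCat).map (Z.δ (0 : Fin (s+2)))) b :=
      inferInstance
    rwa [quasiIsoAt_iff_isIso_homologyMap] at h2
  rw [quasiIso_iff]
  intro n
  apply cx_quasiIsoAt
  · -- injectivity on homology
    intro x hx hw
    rw [down_prev] at hw ⊢
    obtain ⟨w, hwD⟩ := hw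
    have hsupp : SuppLe (doubleComplex Z) (n+1) (n+1) w := fun a b ha => by
      rw [proj_eq_zero (doubleComplex Z) a b (n+1) (by omega), zApply]
    have hD : ∀ a b : ℕ, 1 ≤ a → a + b + 1 = n+1 →
        proj (doubleComplex Z) a b (a+b)
          (((doubleComplex Z).total (ComplexShape.down ℕ)).d (n+1) (a+b) w) = 0 := by
      intro a b ha hab
      rw [show a + b = n from by omega, hwD]
      exact proj_ι_ne (doubleComplex Z) 0 n a b n (by rw [pi_down]; omega)
        (by rintro ⟨h1', h2'⟩; omega) x
    obtain ⟨u, hu⟩ := descent (doubleComplex Z) (n+1) (n+1) HI w hsupp hD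
    have hz0 : ((doubleComplex Z).total (ComplexShape.down ℕ)).d (n+1) n
        (((doubleComplex Z).total (ComplexShape.down ℕ)).d (n+2) (n+1) u) = 0 := by
      have h3 := congrArg
        (fun (f : ((doubleComplex Z).total (ComplexShape.down ℕ)).X (n+2) ⟶
          ((doubleComplex Z).total (ComplexShape.down ℕ)).X n) => f u)
        (((doubleComplex Z).total (ComplexShape.down ℕ)).d_comp_d (n+2) (n+1) n)
      simp only [cApply, zApply] at h3
      exact h3
    set w' := w - ((doubleComplex Z).total (ComplexShape.down ℕ)).d (n+2) (n+1) u with hw'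
    have hDw' : ((doubleComplex Z).total (ComplexShape.down ℕ)).d (n+1) n w'
        = (rowZeroIncl (doubleComplex Z)).f n x := by
      rw [hw', map_sub, hz0, sub_zero, hwD]
    have hcomp := D_proj_apply (doubleComplex Z) 0 n (n+1) (by omega) w'
    rw [show 0 + n = n from Nat.zero_add n, show (0:ℕ) + 1 = 1 from rfl] at hcomp
    rw [hDw', hu 1 n (by omega), map_zero, zero_add, eps2_zero, one_smul] at hcomp
    refine ⟨proj (doubleComplex Z) 0 (n+1) (n+1) w', ?_⟩
    rw [← hcomp]
    exact proj_ι_self (doubleComplex Z) 0 n n (by rw [pi_down]; omega) x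
  · -- surjectivity on homology
    intro y hy
    rw [down_next] at hy
    rw [down_prev, down_next]
    have hsupp : SuppLe (doubleComplex Z) n n y := fun a b ha => by
      rw [proj_eq_zero (doubleComplex Z) a b n (by omega), zApply]
    have hD : ∀ a b : ℕ, 1 ≤ a → a + b + 1 = n →
        proj (doubleComplex Z) a b (a+b)
          (((doubleComplex Z).total (ComplexShape.down ℕ)).d n (a+b) y) = 0 := by
      intro a b ha hab
      rw [show a + b = n - 1 from by omega, hy, map_zero]
    obtain ⟨u, hu⟩ := descent (doubleComplex Z) n n HI y hsupp hD
    set y' := y - ((doubleComplex Z).total (ComplexShape.down ℕ)).d (n+1) n u with hy'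
    have hz0 : ((doubleComplex Z).total (ComplexShape.down ℕ)).d n (n-1)
        (((doubleComplex Z).total (ComplexShape.down ℕ)).d (n+1) n u) = 0 := by
      have h3 := congrArg
        (fun (f : ((doubleComplex Z).total (ComplexShape.down ℕ)).X (n+1) ⟶
          ((doubleComplex Z).total (ComplexShape.down ℕ)).X (n-1)) => f u)
        (((doubleComplex Z).total (ComplexShape.down ℕ)).d_comp_d (n+1) n (n-1))
      simp only [cApply, zApply] at h3
      exact h3
    have hdy' : ((doubleComplex Z).total (ComplexShape.down ℕ)).d n (n-1) y' = 0 := by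
      rw [hy', map_sub, hz0, sub_zero, hy]
    have hdec := total_decomp (doubleComplex Z) n y'
    rw [Finset.sum_eq_single 0 (fun j _ hj => by
        rw [hu j (n-j) (by omega), map_zero])
      (fun habs => absurd (Finset.mem_range.mpr (by omega)) habs)] at hdec
    rw [show n - 0 = n from rfl,
      (doubleComplex Z).ιTotalOrZero_eq _ 0 n n (by rw [pi_down]; omega)] at hdec
    refine ⟨proj (doubleComplex Z) 0 n n y', ?_, -u, ?_⟩
    · -- the extracted class is a cycle in the 0-th row
      cases n with
      | zero =>
        rw [show (0:ℕ) - 1 = 0 from rfl,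
          ((doubleComplex Z).X 0).shape 0 0 (by simp [ComplexShape.down_Rel]), zApply]
      | succ n' =>
        have hcomp := D_proj_apply (doubleComplex Z) 0 n' (n'+1) (by omega) y'
        rw [show 0 + n' = n' from Nat.zero_add n', show (0:ℕ) + 1 = 1 from rfl] at hcomp
        rw [show ((doubleComplex Z).total (ComplexShape.down ℕ)).d (n'+1) n' y' = 0 from hdy',
          map_zero, hu 1 n' (by omega), map_zero, zero_add, eps2_zero, one_smul] at hcomp
        exact hcomp.symm
    · -- the inclusion of the extracted cycle differs from `y` by a boundary
      rw [map_neg]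
      have : (rowZeroIncl (doubleComplex Z)).f n (proj (doubleComplex Z) 0 n n y') = y' :=
        hdec.symm
      rw [this, hy']
      abel

end Main


end Stmt13
end
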